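/- arXiv:math/0609493 — 3 statements merged into one kernel-verified Lean document; each statement's English description precedes it below -/
import Mathlib

section
/- Let n ≥ 1, let u : ℝⁿ → ℝ be smooth with compact support and let v : ℝⁿ → ℝ be smooth. Then −∫_{ℝⁿ} (∑_{i=1}^{n} ∂²u/∂x_i²)(x) · u(x) v(x)² dx = ∫_{ℝⁿ} ‖∇(u v)(x)‖² dx − ∫_{ℝⁿ} u(x)² ‖∇v(x)‖² dx. -/
open MeasureTheory Real

private lemma grad_norm_sq {n : ℕ} (f : EuclideanSpace ℝ (Fin n) → ℝ)
    (x : EuclideanSpace ℝ (Fin n)) :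
    ‖gradient f x‖ ^ 2 = ∑ i : Fin n, (fderiv ℝ f x (EuclideanSpace.single i 1)) ^ 2 := by
  have h : ∀ i : Fin n, gradient f x i = fderiv ℝ f x (EuclideanSpace.single i 1) := by
    intro i
    have h1 : @inner ℝ (EuclideanSpace ℝ (Fin n)) _ (gradient f x) (EuclideanSpace.single i 1)
        = fderiv ℝ f x (EuclideanSpace.single i 1) :=
      InnerProductSpace.toDual_symm_apply
    rw [← h1, real_inner_comm, EuclideanSpace.inner_single_left]
    simp
  rw [EuclideanSpace.norm_eq, Real.sq_sqrt (by positivity)]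
  exact Finset.sum_congr rfl fun i _ => by rw [h i]; simp [sq_abs]

theorem stmt_1 (n : ℕ) (hn : 1 ≤ n)
    (u v : EuclideanSpace ℝ (Fin n) → ℝ)
    (hu : ContDiff ℝ (⊤ : ℕ∞) u) (hu_supp : HasCompactSupport u)
    (hv : ContDiff ℝ (⊤ : ℕ∞) v) :
    -∫ x : EuclideanSpace ℝ (Fin n),
        (∑ i : Fin n, fderiv ℝ (fun y => fderiv ℝ u y (EuclideanSpace.single i 1)) x
          (EuclideanSpace.single i 1)) * u x * (v x) ^ 2 =
      (∫ x : EuclideanSpace ℝ (Fin n), ‖gradient (fun y => u y * v y) x‖ ^ 2) -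
        ∫ x : EuclideanSpace ℝ (Fin n), (u x) ^ 2 * ‖gradient v x‖ ^ 2 := by
  classical
  have hud : Differentiable ℝ u := hu.differentiable (by simp)
  have hvd : Differentiable ℝ v := hv.differentiable (by simp)
  have deriv_contDiff : ∀ (f : EuclideanSpace ℝ (Fin n) → ℝ), ContDiff ℝ (⊤ : ℕ∞) f →
      ∀ z : EuclideanSpace ℝ (Fin n), ContDiff ℝ (⊤ : ℕ∞) (fun x => fderiv ℝ f x z) := fun f hf z =>
    (hf.fderiv_right (by simp)).clm_apply contDiff_const
  have supp_deriv : ∀ (f : EuclideanSpace ℝ (Fin n) → ℝ), HasCompactSupport f →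
      ∀ z : EuclideanSpace ℝ (Fin n), HasCompactSupport (fun x => fderiv ℝ f x z) := fun f hf z =>
    (hf.fderiv (𝕜 := ℝ)).comp_left
      (g := fun L : EuclideanSpace ℝ (Fin n) →L[ℝ] ℝ => L z) (by simp)
  have hw : ContDiff ℝ (⊤ : ℕ∞) (fun y => u y * v y ^ 2) := hu.mul (hv.pow 2)
  have hw_supp : HasCompactSupport (fun y => u y * v y ^ 2) := hu_supp.mul_right
  have hwd : Differentiable ℝ (fun y => u y * v y ^ 2) := hw.differentiable (by simp)
  have huv : ContDiff ℝ (⊤ : ℕ∞) (fun y => u y * v y) := hu.mul hv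
  have huv_supp : HasCompactSupport (fun y => u y * v y) := hu_supp.mul_right
  have intgr : ∀ (f : EuclideanSpace ℝ (Fin n) → ℝ), Continuous f → HasCompactSupport f →
      Integrable f := fun f hc hs => hc.integrable_of_hasCompactSupport hs
  have int1 : ∀ i : Fin n, Integrable (fun x => (u x * v x ^ 2) *
      fderiv ℝ (fun y => fderiv ℝ u y (EuclideanSpace.single i 1)) x
        (EuclideanSpace.single i 1)) := fun i =>
    intgr _ (hw.continuous.mul
        (deriv_contDiff _ (deriv_contDiff u hu _) (EuclideanSpace.single i 1)).continuous)
      hw_supp.mul_right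
  have int2 : ∀ i : Fin n, Integrable (fun x =>
      fderiv ℝ (fun y => u y * v y ^ 2) x (EuclideanSpace.single i 1) *
      fderiv ℝ u x (EuclideanSpace.single i 1)) := fun i =>
    intgr _ ((deriv_contDiff _ hw _).continuous.mul (deriv_contDiff u hu _).continuous)
      ((supp_deriv _ hw_supp (EuclideanSpace.single i 1)).mul_right)
  have int3 : ∀ i : Fin n, Integrable (fun x =>
      (u x * v x ^ 2) * fderiv ℝ u x (EuclideanSpace.single i 1)) := fun i =>
    intgr _ (hw.continuous.mul (deriv_contDiff u hu _).continuous) hw_supp.mul_right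
  have int4 : ∀ i : Fin n, Integrable (fun x =>
      (fderiv ℝ (fun y => u y * v y) x (EuclideanSpace.single i 1)) ^ 2) := fun i =>
    intgr _ ((deriv_contDiff _ huv _).continuous.pow 2)
      ((supp_deriv _ huv_supp (EuclideanSpace.single i 1)).comp_left
        (g := fun r : ℝ => r ^ 2) (by simp))
  have int5 : ∀ i : Fin n, Integrable (fun x =>
      u x ^ 2 * (fderiv ℝ v x (EuclideanSpace.single i 1)) ^ 2) := fun i =>
    intgr _ ((hu.continuous.pow 2).mul ((deriv_contDiff v hv _).continuous.pow 2))
      ((hu_supp.comp_left (g := fun r : ℝ => r ^ 2) (by simp)).mul_right)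
  have ibp : ∀ i : Fin n, ∫ x, (u x * v x ^ 2) *
        fderiv ℝ (fun y => fderiv ℝ u y (EuclideanSpace.single i 1)) x (EuclideanSpace.single i 1)
      = - ∫ x, fderiv ℝ (fun y => u y * v y ^ 2) x (EuclideanSpace.single i 1) *
          fderiv ℝ u x (EuclideanSpace.single i 1) := fun i =>
    integral_mul_fderiv_eq_neg_fderiv_mul_of_integrable (int2 i) (int1 i) (int3 i)
      (fun x _ => hwd x) (fun x _ => (deriv_contDiff u hu _).differentiable (by simp) x)
  have hfw : ∀ (x : EuclideanSpace ℝ (Fin n)) (i : Fin n),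
      fderiv ℝ (fun y => u y * v y ^ 2) x (EuclideanSpace.single i 1)
      = fderiv ℝ u x (EuclideanSpace.single i 1) * v x ^ 2
        + u x * (2 * v x * fderiv ℝ v x (EuclideanSpace.single i 1)) := by
    intro x i
    have h2 : fderiv ℝ (fun y => v y ^ 2) x (EuclideanSpace.single i 1)
        = 2 * v x * fderiv ℝ v x (EuclideanSpace.single i 1) := by
      have hvv : (fun y => v y ^ 2) = fun y => v y * v y := by funext y; ring
      rw [hvv, fderiv_fun_mul (hvd x) (hvd x)]
      simp; ring
    rw [fderiv_fun_mul (d := fun y => v y ^ 2) (hud x) ((hvd x).pow 2)]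
    simp [h2]; ring
  have hfuv : ∀ (x : EuclideanSpace ℝ (Fin n)) (i : Fin n),
      fderiv ℝ (fun y => u y * v y) x (EuclideanSpace.single i 1)
      = u x * fderiv ℝ v x (EuclideanSpace.single i 1)
        + v x * fderiv ℝ u x (EuclideanSpace.single i 1) := by
    intro x i
    rw [fderiv_fun_mul (hud x) (hvd x)]
    simp
  have lhs_eq : -∫ x : EuclideanSpace ℝ (Fin n),
      (∑ i : Fin n, fderiv ℝ (fun y => fderiv ℝ u y (EuclideanSpace.single i 1)) x
        (EuclideanSpace.single i 1)) * u x * (v x) ^ 2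
      = ∑ i : Fin n, ∫ x, fderiv ℝ (fun y => u y * v y ^ 2) x (EuclideanSpace.single i 1) *
          fderiv ℝ u x (EuclideanSpace.single i 1) := by
    have step1 : (fun x : EuclideanSpace ℝ (Fin n) =>
        (∑ i : Fin n, fderiv ℝ (fun y => fderiv ℝ u y (EuclideanSpace.single i 1)) x
          (EuclideanSpace.single i 1)) * u x * (v x) ^ 2)
        = fun x => ∑ i : Fin n, (u x * v x ^ 2) *
            fderiv ℝ (fun y => fderiv ℝ u y (EuclideanSpace.single i 1)) x
              (EuclideanSpace.single i 1) := by
      funext x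
      rw [Finset.sum_mul, Finset.sum_mul]
      exact Finset.sum_congr rfl fun i _ => by ring
    rw [step1, integral_finset_sum _ (fun i _ => int1 i), ← Finset.sum_neg_distrib]
    exact Finset.sum_congr rfl fun i _ => by rw [ibp i, neg_neg]
  rw [lhs_eq]
  have rhs1 : (∫ x : EuclideanSpace ℝ (Fin n), ‖gradient (fun y => u y * v y) x‖ ^ 2)
      = ∑ i : Fin n, ∫ x,
          (fderiv ℝ (fun y => u y * v y) x (EuclideanSpace.single i 1)) ^ 2 := by
    simp_rw [grad_norm_sq]
    exact integral_finset_sum _ (fun i _ => int4 i)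
  have rhs2 : (∫ x : EuclideanSpace ℝ (Fin n), (u x) ^ 2 * ‖gradient v x‖ ^ 2)
      = ∑ i : Fin n, ∫ x, u x ^ 2 * (fderiv ℝ v x (EuclideanSpace.single i 1)) ^ 2 := by
    simp_rw [grad_norm_sq, Finset.mul_sum]
    exact integral_finset_sum _ (fun i _ => int5 i)
  rw [rhs1, rhs2, ← Finset.sum_sub_distrib]
  refine Finset.sum_congr rfl fun i _ => ?_
  rw [← integral_sub (int4 i) (int5 i)]
  refine integral_congr_ae (Filter.Eventually.of_forall fun x => ?_)
  simp only [hfw x i, hfuv x i]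
  ring
end

section
/- Define, for 0 < ε and 0 < α, the function f_{α,ε} : ℝ² → ℝ by f_{α,ε}(x) = ε²/(ε² + ‖x‖²) if ‖x‖ ≤ α and f_{α,ε}(x) = ε²/(ε² + α²) if ‖x‖ > α, and let f(x) = 2/(1 + ‖x‖²). Then for all 0 < ε ≤ α ≤ δ, ∫_{B(0,2δ)} f(x/ε) · f_{α,ε}(x)^{-1} dx ≤ 2π α² + 4π α² ln( (ε² + 4δ²)/(ε² + α²) ). -/
open MeasureTheory Real

/-- The conformal factor `f_{α,ε}` on the plane. -/
noncomputable def fae (α ε : ℝ) (x : EuclideanSpace ℝ (Fin 2)) : ℝ :=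
  if ‖x‖ ≤ α then ε ^ 2 / (ε ^ 2 + ‖x‖ ^ 2) else ε ^ 2 / (ε ^ 2 + α ^ 2)

/-- The round-sphere conformal factor `f(x) = 2/(1+|x|²)`. -/
noncomputable def fsph (x : EuclideanSpace ℝ (Fin 2)) : ℝ :=
  2 / (1 + ‖x‖ ^ 2)

/-!
Since `f(x/ε) = 2ε²/(ε² + ‖x‖²)` and `f_{α,ε}(x) = ε²/(ε² + min(‖x‖, α)²)`, the integrand is the
continuous radial function `2(ε² + min(r, α)²)/(ε² + r²)` of `r = ‖x‖`. In polar coordinates its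
integral over `B(0, 2δ)` is exactly `2π(α² + (ε² + α²) ln((ε² + 4δ²)/(ε² + α²)))`: the part `r ≤ α`
contributes `2π α²` and on `α ≤ r` the integrand `2(ε² + α²) r/(ε² + r²)` has a logarithmic
primitive. Finally `ε ≤ α` gives `ε² + α² ≤ 2α²`.
-/

open Set Metric

section Radial

variable {E F : Type*} [NormedAddCommGroup E] [NormedSpace ℝ E] [Nontrivial E]
  [FiniteDimensional ℝ E] [MeasurableSpace E] [BorelSpace E]
  [NormedAddCommGroup F] [NormedSpace ℝ F] (μ : Measure E) [μ.IsAddHaarMeasure]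

theorem setIntegral_ball_fun_norm_addHaar (f : ℝ → F) (r : ℝ) :
    ∫ x in ball (0 : E) r, f ‖x‖ ∂μ =
      Module.finrank ℝ E • μ.real (ball 0 1) •
        ∫ y in Ioo 0 r, y ^ (Module.finrank ℝ E - 1) • f y := by
  have hind : (ball (0 : E) r).indicator (fun x => f ‖x‖) = fun x => (Iio r).indicator f ‖x‖ := by
    ext x
    by_cases hx : ‖x‖ < r <;> simp [indicator, hx]
  rw [← integral_indicator measurableSet_ball, hind, integral_fun_norm_addHaar,
    ← Ioi_inter_Iio, ← setIntegral_indicator measurableSet_Iio]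
  simp_rw [indicator_smul_apply]

end Radial

theorem EuclideanSpace.setIntegral_ball_fin_two_fun_norm (g : ℝ → ℝ) {r : ℝ} (hr : 0 ≤ r) :
    ∫ x in ball (0 : EuclideanSpace ℝ (Fin 2)) r, g ‖x‖ = 2 * π * ∫ y in 0..r, y * g y := by
  rw [setIntegral_ball_fun_norm_addHaar, finrank_euclideanSpace_fin, measureReal_def,
    EuclideanSpace.volume_ball_fin_two, intervalIntegral.integral_of_le hr,
    ← integral_Ioc_eq_integral_Ioo]
  simp only [ENNReal.ofReal_one, one_pow, one_mul, ENNReal.toReal_ofReal pi_nonneg,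
    Nat.add_one_sub_one, pow_one, smul_eq_mul, nsmul_eq_mul, Nat.cast_ofNat]
  ring

theorem integral_id_div_add_sq {c : ℝ} (hc : 0 < c) (a b : ℝ) :
    ∫ y in a..b, y / (c + y ^ 2) = Real.log ((c + b ^ 2) / (c + a ^ 2)) / 2 := by
  have hpos : ∀ y : ℝ, 0 < c + y ^ 2 := fun y => by positivity
  have hderiv : ∀ y ∈ uIcc a b,
      HasDerivAt (fun y => Real.log (c + y ^ 2) / 2) (y / (c + y ^ 2)) y := by
    intro y _
    refine ((((hasDerivAt_pow 2 y).const_add c).log (hpos y).ne').div_const 2).congr_deriv ?_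
    norm_num
    ring
  rw [intervalIntegral.integral_eq_sub_of_hasDerivAt hderiv
    ((continuous_id.div (continuous_const.add (continuous_pow 2))
      fun y => (hpos y).ne').intervalIntegrable _ _),
    Real.log_div (hpos b).ne' (hpos a).ne']
  ring

noncomputable def conformalRatio (α ε r : ℝ) : ℝ :=
  2 * (ε ^ 2 + min r α ^ 2) / (ε ^ 2 + r ^ 2)

theorem fsph_inv_smul {ε : ℝ} (hε : ε ≠ 0) (x : EuclideanSpace ℝ (Fin 2)) :
    fsph (ε⁻¹ • x) = 2 * ε ^ 2 / (ε ^ 2 + ‖x‖ ^ 2) := by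
  rw [fsph, norm_smul, norm_inv, Real.norm_eq_abs, mul_pow, inv_pow, sq_abs]
  field_simp

theorem fae_eq_div_min (α ε : ℝ) (x : EuclideanSpace ℝ (Fin 2)) :
    fae α ε x = ε ^ 2 / (ε ^ 2 + min ‖x‖ α ^ 2) := by
  unfold fae
  split_ifs with h
  · rw [min_eq_left h]
  · rw [min_eq_right (not_le.1 h).le]

theorem fsph_inv_smul_mul_fae_inv {ε : ℝ} (hε : ε ≠ 0) (α : ℝ) (x : EuclideanSpace ℝ (Fin 2)) :
    fsph (ε⁻¹ • x) * (fae α ε x)⁻¹ = conformalRatio α ε ‖x‖ := by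
  have : 0 < ε ^ 2 + min ‖x‖ α ^ 2 := by positivity
  rw [fsph_inv_smul hε, fae_eq_div_min, conformalRatio]
  field_simp

theorem integral_mul_conformalRatio {ε α r : ℝ} (hε : ε ≠ 0) (hα : 0 ≤ α) (hαr : α ≤ r) :
    ∫ y in 0..r, y * conformalRatio α ε y =
      α ^ 2 + (ε ^ 2 + α ^ 2) * Real.log ((ε ^ 2 + r ^ 2) / (ε ^ 2 + α ^ 2)) := by
  have hε2 : 0 < ε ^ 2 := by positivity
  have hcont : Continuous fun y => y * conformalRatio α ε y := by
    unfold conformalRatio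
    fun_prop (disch := intro y; positivity)
  have hinner : ∫ y in 0..α, y * conformalRatio α ε y = α ^ 2 := by
    rw [intervalIntegral.integral_congr (g := fun y => 2 * y), intervalIntegral.integral_const_mul,
      integral_id]
    · ring
    intro y hy
    rw [uIcc_of_le hα] at hy
    have : 0 < ε ^ 2 + y ^ 2 := by positivity
    simp only [conformalRatio, min_eq_left hy.2]
    field_simp
  have houter : ∫ y in α..r, y * conformalRatio α ε y =
      (ε ^ 2 + α ^ 2) * Real.log ((ε ^ 2 + r ^ 2) / (ε ^ 2 + α ^ 2)) := by
    rw [intervalIntegral.integral_congr (g := fun y => 2 * (ε ^ 2 + α ^ 2) * (y / (ε ^ 2 + y ^ 2))),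
      intervalIntegral.integral_const_mul, integral_id_div_add_sq hε2]
    · ring
    intro y hy
    rw [uIcc_of_le hαr] at hy
    simp only [conformalRatio, min_eq_right hy.1]
    ring
  rw [← intervalIntegral.integral_add_adjacent_intervals (b := α) (hcont.intervalIntegrable _ _)
    (hcont.intervalIntegrable _ _), hinner, houter]

theorem stmt_5 (ε α δ : ℝ) (hε : 0 < ε) (hεα : ε ≤ α) (hαδ : α ≤ δ) :
    ∫ x in Metric.ball (0 : EuclideanSpace ℝ (Fin 2)) (2 * δ),
        fsph (ε⁻¹ • x) * (fae α ε x)⁻¹ ≤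
      2 * π * α ^ 2 +
        4 * π * α ^ 2 * Real.log ((ε ^ 2 + 4 * δ ^ 2) / (ε ^ 2 + α ^ 2)) := by
  have hα : 0 < α := hε.trans_le hεα
  have hα2δ : α ≤ 2 * δ := by linarith
  simp_rw [fsph_inv_smul_mul_fae_inv hε.ne']
  rw [EuclideanSpace.setIntegral_ball_fin_two_fun_norm _ (hα.le.trans hα2δ),
    integral_mul_conformalRatio hε.ne' hα.le hα2δ, show (2 * δ) ^ 2 = 4 * δ ^ 2 by ring]
  have hlog : 0 ≤ Real.log ((ε ^ 2 + 4 * δ ^ 2) / (ε ^ 2 + α ^ 2)) :=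
    Real.log_nonneg <| (one_le_div (by positivity)).2 (by nlinarith)
  have hcoef : ε ^ 2 + α ^ 2 ≤ 2 * α ^ 2 := by nlinarith
  calc 2 * π * (α ^ 2 + (ε ^ 2 + α ^ 2) * Real.log ((ε ^ 2 + 4 * δ ^ 2) / (ε ^ 2 + α ^ 2)))
      ≤ 2 * π * (α ^ 2 + 2 * α ^ 2 * Real.log ((ε ^ 2 + 4 * δ ^ 2) / (ε ^ 2 + α ^ 2))) := by
        gcongr
    _ = _ := by ring
end

section
/- Let f and (f_n)_{n∈ℕ} be continuous, everywhere positive, ℤ²-periodic functions on ℝ² such that f_n converges to f uniformly on ℝ². Then μ₁(f_n) converges to μ₁(f), where for a continuous positive ℤ²-periodic function h, μ₁(h) denotes the infimum of ∫_{[0,1]²} ‖∇u(x)‖² dx / ∫_{[0,1]²} u(x)² h(x)² dx over all smooth ℤ²-periodic functions u : ℝ² → ℝ that are not identically zero and satisfy ∫_{[0,1]²} u(x) h(x)² dx = 0. -/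
open MeasureTheory Real Filter

/-- A function on the Euclidean plane is `ℤ²`-periodic if it is invariant under
translation by both standard basis vectors (equivalently, by every lattice vector). -/
def ZsqPeriodic (w : EuclideanSpace ℝ (Fin 2) → ℝ) : Prop :=
  ∀ x : EuclideanSpace ℝ (Fin 2), ∀ i : Fin 2, w (x + EuclideanSpace.single i 1) = w x

/-- The fundamental domain `[0,1]²` of the torus `ℝ²/ℤ²`. -/
def unitSquare : Set (EuclideanSpace ℝ (Fin 2)) :=
  {x | ∀ i : Fin 2, x i ∈ Set.Icc (0 : ℝ) 1}

namespace Stmt7Aux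

abbrev E2 := EuclideanSpace ℝ (Fin 2)

lemma abs_coord_le_norm (z : E2) (i : Fin 2) : |z i| ≤ ‖z‖ := by
  rw [EuclideanSpace.norm_eq, ← Real.sqrt_sq_eq_abs]
  apply Real.sqrt_le_sqrt
  have := Finset.single_le_sum (f := fun j => z j ^ 2) (fun j _ => sq_nonneg (z j))
    (Finset.mem_univ i)
  simpa [Real.norm_eq_abs, sq_abs] using this

lemma isClosed_unitSquare : IsClosed unitSquare := by
  have : unitSquare = ⋂ i : Fin 2, (fun x : E2 => x i) ⁻¹' Set.Icc (0:ℝ) 1 := by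
    ext x; simp [unitSquare, Set.mem_iInter]
  rw [this]
  exact isClosed_iInter fun i =>
    IsClosed.preimage (EuclideanSpace.proj i).continuous isClosed_Icc

lemma isCompact_unitSquare : IsCompact unitSquare := by
  apply Metric.isCompact_of_isClosed_isBounded isClosed_unitSquare
  rw [Metric.isBounded_iff_subset_closedBall 0]
  refine ⟨2, fun x hx => ?_⟩
  simp only [Metric.mem_closedBall, dist_zero_right]
  rw [EuclideanSpace.norm_eq]
  have : ∀ i : Fin 2, x i ^ 2 ≤ 1 := fun i => by
    have h := hx i
    nlinarith [h.1, h.2]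
  calc Real.sqrt (∑ i, ‖x i‖ ^ 2) ≤ Real.sqrt 2 := by
        apply Real.sqrt_le_sqrt
        have := Finset.sum_le_sum (fun i (_ : i ∈ Finset.univ) => this i)
        simpa [Real.norm_eq_abs, sq_abs] using this
    _ ≤ 2 := by
        nlinarith [Real.sq_sqrt (by norm_num : (0:ℝ) ≤ 2), Real.sqrt_nonneg 2]

lemma measurableSet_unitSquare : MeasurableSet unitSquare :=
  isClosed_unitSquare.measurableSet

lemma integrableOn_sq (g : E2 → ℝ) (hg : Continuous g) :
    IntegrableOn g unitSquare volume :=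
  hg.continuousOn.integrableOn_compact isCompact_unitSquare


lemma single_add (i : Fin 2) (a b : ℝ) :
    EuclideanSpace.single i (a + b) = EuclideanSpace.single i a + EuclideanSpace.single i b := by
  ext j
  simp [EuclideanSpace.single_apply, PiLp.add_apply]
  split <;> simp

lemma periodic_int {w : E2 → ℝ} (hw : ZsqPeriodic w) (i : Fin 2) (n : ℤ) (x : E2) :
    w (x + EuclideanSpace.single i (n : ℝ)) = w x := by
  induction n using Int.induction_on with
  | zero => simp [show EuclideanSpace.single i (0:ℝ) = 0 by ext j; simp [EuclideanSpace.single_apply]]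
  | succ n ih =>
      push_cast at ih ⊢
      rw [show ((n:ℝ) + 1) = (n:ℝ) + 1 from rfl, single_add, ← add_assoc, hw, ih]
  | pred n ih =>
      push_cast at ih ⊢
      have h2 := hw (x + EuclideanSpace.single i (-(n:ℝ) - 1)) i
      rw [add_assoc, ← single_add] at h2
      norm_num at h2
      rw [← h2, ih]

lemma periodic_reduce {w : E2 → ℝ} (hw : ZsqPeriodic w) (x : E2) :
    ∃ y : E2, (∀ i : Fin 2, 0 ≤ y i ∧ y i < 1) ∧ w y = w x := by
  refine ⟨x + (EuclideanSpace.single 0 ((-⌊x 0⌋ : ℤ) : ℝ) +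
      EuclideanSpace.single 1 ((-⌊x 1⌋ : ℤ) : ℝ)), ?_, ?_⟩
  · intro i
    fin_cases i <;>
      simp only [PiLp.add_apply, EuclideanSpace.single_apply] <;>
      norm_num <;>
      constructor <;>
      [skip; skip; skip; skip] <;>
      push_cast <;>
      linarith [Int.floor_le (x 0), Int.lt_floor_add_one (x 0),
        Int.floor_le (x 1), Int.lt_floor_add_one (x 1)]
  · rw [← add_assoc, periodic_int hw 1, periodic_int hw 0]


lemma ball_subset_square {y : E2} (hy : ∀ i : Fin 2, 0 ≤ y i ∧ y i < 1)
    {ρ : ℝ} (hρ : 0 < ρ) :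
    ∃ z : E2, ∃ r : ℝ, 0 < r ∧ Metric.ball z r ⊆ unitSquare ∧
      Metric.ball z r ⊆ Metric.ball y ρ := by
  classical
  set r0 : ℝ := min ρ (min (1 - y 0) (1 - y 1)) / 4 with hr0
  have h0 : 0 < 1 - y 0 := by linarith [(hy 0).2]
  have h1 : 0 < 1 - y 1 := by linarith [(hy 1).2]
  have hr0pos : 0 < r0 := by
    apply div_pos _ (by norm_num)
    exact lt_min hρ (lt_min h0 h1)
  set z : E2 := y + (EuclideanSpace.single 0 r0 + EuclideanSpace.single 1 r0) with hz
  have hzc : ∀ i : Fin 2, z i = y i + r0 := by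
    intro i; fin_cases i <;> simp [hz, PiLp.add_apply, EuclideanSpace.single_apply]
  refine ⟨z, r0, hr0pos, ?_, ?_⟩
  · intro w hw
    intro i
    have hco : |w i - z i| ≤ ‖w - z‖ := by
      have := abs_coord_le_norm (w - z) i
      simpa [PiLp.sub_apply] using this
    have hdist : ‖w - z‖ < r0 := by
      rw [← dist_eq_norm]; exact hw
    have habs : |w i - z i| < r0 := lt_of_le_of_lt hco hdist
    rw [abs_lt] at habs
    rw [hzc i] at habs
    have hyi := hy i
    have hmin : min ρ (min (1 - y 0) (1 - y 1)) ≤ 1 - y i := by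
      fin_cases i
      · exact le_trans (min_le_right _ _) (min_le_left _ _)
      · exact le_trans (min_le_right _ _) (min_le_right _ _)
    have hri : r0 ≤ (1 - y i) / 4 := by
      rw [hr0]; linarith
    constructor <;> [linarith [hyi.1, habs.1]; linarith [hyi.2, habs.2]]
  · intro w hw
    have hzy : dist z y ≤ 2 * r0 := by
      rw [dist_eq_norm]
      have : z - y = EuclideanSpace.single 0 r0 + EuclideanSpace.single 1 r0 := by
        rw [hz]; abel
      rw [this]
      calc ‖EuclideanSpace.single (0:Fin 2) r0 + EuclideanSpace.single 1 r0‖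
          ≤ ‖EuclideanSpace.single (0:Fin 2) r0‖ + ‖EuclideanSpace.single (1:Fin 2) r0‖ :=
            norm_add_le _ _
        _ ≤ 2 * r0 := by
            rw [EuclideanSpace.norm_single, EuclideanSpace.norm_single]
            simp [abs_of_pos hr0pos]; linarith
    have := Metric.mem_ball.1 hw
    rw [Metric.mem_ball]
    have hr0ρ : r0 ≤ ρ / 4 := by
      rw [hr0]
      exact div_le_div_of_nonneg_right (min_le_left _ _) (by norm_num)
    calc dist w y ≤ dist w z + dist z y := dist_triangle _ _ _
      _ < r0 + 2 * r0 := by linarith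
      _ < ρ := by linarith

lemma setIntegral_pos_of_pos_at {g : E2 → ℝ} (hg : Continuous g) (hnn : ∀ x, 0 ≤ g x)
    {y : E2} (hy : ∀ i : Fin 2, 0 ≤ y i ∧ y i < 1) (hgy : 0 < g y) :
    0 < ∫ x in unitSquare, g x := by
  have hcont : ∀ᶠ w in nhds y, g y / 2 < g w :=
    hg.continuousAt.eventually_const_lt (by linarith)
  rcases Metric.eventually_nhds_iff_ball.1 hcont with ⟨ρ, hρ, hball⟩
  rcases ball_subset_square hy hρ with ⟨z, r, hr, hsub, hsub'⟩
  rw [setIntegral_pos_iff_support_of_nonneg_ae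
    (Filter.Eventually.of_forall fun x => hnn x) (integrableOn_sq g hg)]
  have hsupp : Metric.ball z r ⊆ Function.support g ∩ unitSquare := by
    intro w hw
    exact ⟨fun h0 => by have := hball w (hsub' hw); rw [h0] at this; linarith [hnn y],
      hsub hw⟩
  exact lt_of_lt_of_le (Metric.measure_ball_pos volume z hr) (measure_mono hsupp)

lemma integral_sq_h_pos {h : E2 → ℝ} (hh : Continuous h) (hhp : ∀ x, 0 < h x) :
    0 < ∫ x in unitSquare, h x ^ 2 := by
  apply setIntegral_pos_of_pos_at (by fun_prop) (fun x => sq_nonneg _)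
    (y := 0) (fun i => by norm_num) (pow_pos (hhp 0) 2)

lemma integral_u_sq_pos {u h : E2 → ℝ} (hu : Continuous u) (hup : ZsqPeriodic u)
    (hune : u ≠ 0) (hh : Continuous h) (hhp : ∀ x : E2, 0 < h x) :
    0 < ∫ x in unitSquare, u x ^ 2 * h x ^ 2 := by
  obtain ⟨x0, hx0⟩ : ∃ x, u x ≠ 0 := by
    by_contra hcon
    push_neg at hcon
    exact hune (funext hcon)
  obtain ⟨y, hy, hyx⟩ := periodic_reduce hup x0
  apply setIntegral_pos_of_pos_at (by fun_prop)
    (fun x => mul_nonneg (sq_nonneg _) (sq_nonneg _)) hy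
  apply mul_pos _ (pow_pos (hhp y) 2)
  rw [hyx]
  exact pow_pos (abs_pos.2 hx0) 2 |>.trans_le (by rw [sq_abs])


lemma expand_denominator {u k : E2 → ℝ} (hu : Continuous u) (hk : Continuous k) (c : ℝ) :
    ∫ x in unitSquare, (u x - c) ^ 2 * k x ^ 2 =
      (∫ x in unitSquare, u x ^ 2 * k x ^ 2) - 2 * c * (∫ x in unitSquare, u x * k x ^ 2)
        + c ^ 2 * (∫ x in unitSquare, k x ^ 2) := by
  have hptw : ∀ x : E2, (u x - c) ^ 2 * k x ^ 2 =
      u x ^ 2 * k x ^ 2 - 2 * c * (u x * k x ^ 2) + c ^ 2 * k x ^ 2 := fun x => by ring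
  simp only [hptw]
  rw [integral_add, integral_sub, integral_const_mul, integral_const_mul]
  · exact integrableOn_sq _ (by fun_prop)
  · exact (integrableOn_sq _ (by fun_prop : Continuous fun x => u x * k x ^ 2)).const_mul _
  · exact (integrableOn_sq _ (by fun_prop : Continuous fun x =>
      u x ^ 2 * k x ^ 2 - 2 * c * (u x * k x ^ 2)))
  · exact (integrableOn_sq _ (by fun_prop : Continuous fun x => k x ^ 2)).const_mul _

lemma cauchy_schwarz {p q : E2 → ℝ} (hp : Continuous p) (hq : Continuous q)
    (hB : 0 < ∫ x in unitSquare, q x ^ 2) :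
    (∫ x in unitSquare, p x * q x) ^ 2 ≤
      (∫ x in unitSquare, p x ^ 2) * (∫ x in unitSquare, q x ^ 2) := by
  set A := ∫ x in unitSquare, p x ^ 2 with hA
  set B := ∫ x in unitSquare, q x ^ 2 with hBdef
  set I := ∫ x in unitSquare, p x * q x with hI
  have key : 0 ≤ ∫ x in unitSquare, (B * p x - I * q x) ^ 2 :=
    setIntegral_nonneg measurableSet_unitSquare (fun x _ => sq_nonneg _)
  have hptw : ∀ x : E2, (B * p x - I * q x) ^ 2 =
      B ^ 2 * p x ^ 2 - B * I * 2 * (p x * q x) + I ^ 2 * q x ^ 2 := fun x => by ring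
  have expand : ∫ x in unitSquare, (B * p x - I * q x) ^ 2 =
      B ^ 2 * A - B * I * 2 * I + I ^ 2 * B := by
    simp only [hptw]
    rw [integral_add, integral_sub, integral_const_mul, integral_const_mul,
      integral_const_mul]
    · exact (integrableOn_sq _ (by fun_prop : Continuous fun x => p x ^ 2)).const_mul _
    · exact (integrableOn_sq _ (by fun_prop : Continuous fun x => p x * q x)).const_mul _
    · exact (integrableOn_sq _ (by fun_prop : Continuous fun x =>
        B ^ 2 * p x ^ 2 - B * I * 2 * (p x * q x)))
    · exact (integrableOn_sq _ (by fun_prop : Continuous fun x => q x ^ 2)).const_mul _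
  rw [expand] at key
  nlinarith [hB, key]


lemma gradient_sub_const (u : E2 → ℝ) (c : ℝ) :
    gradient (fun x => u x - c) = gradient u := by
  funext x
  simp only [gradient, fderiv_sub_const]

end Stmt7Aux

/-- First nonzero eigenvalue of the Laplacian of the generalized metric `h² g_flat`
on the flat torus `ℝ²/ℤ²`, defined via the Rayleigh quotient. -/
noncomputable def mu1 (h : EuclideanSpace ℝ (Fin 2) → ℝ) : ℝ :=
  sInf { r : ℝ | ∃ u : EuclideanSpace ℝ (Fin 2) → ℝ,
    ContDiff ℝ (⊤ : ℕ∞) u ∧ ZsqPeriodic u ∧ u ≠ 0 ∧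
    (∫ x in unitSquare, u x * (h x) ^ 2) = 0 ∧
    r = (∫ x in unitSquare, ‖gradient u x‖ ^ 2) /
          (∫ x in unitSquare, (u x) ^ 2 * (h x) ^ 2) }

namespace Stmt7Aux

def RSet (h : E2 → ℝ) : Set ℝ :=
  { r : ℝ | ∃ u : EuclideanSpace ℝ (Fin 2) → ℝ,
    ContDiff ℝ (⊤ : ℕ∞) u ∧ ZsqPeriodic u ∧ u ≠ 0 ∧
    (∫ x in unitSquare, u x * (h x) ^ 2) = 0 ∧
    r = (∫ x in unitSquare, ‖gradient u x‖ ^ 2) /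
          (∫ x in unitSquare, (u x) ^ 2 * (h x) ^ 2) }

lemma mu1_eq (h : E2 → ℝ) : mu1 h = sInf (RSet h) := rfl

lemma RSet_nonneg {h : E2 → ℝ} {r : ℝ} (hr : r ∈ RSet h) : 0 ≤ r := by
  obtain ⟨u, -, -, -, -, rfl⟩ := hr
  apply div_nonneg
  · exact setIntegral_nonneg measurableSet_unitSquare (fun x _ => sq_nonneg _)
  · exact setIntegral_nonneg measurableSet_unitSquare
      (fun x _ => mul_nonneg (sq_nonneg _) (sq_nonneg _))

lemma RSet_bddBelow (h : E2 → ℝ) : BddBelow (RSet h) :=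
  ⟨0, fun _ hr => RSet_nonneg hr⟩

lemma mu1_nonneg (h : E2 → ℝ) : 0 ≤ mu1 h :=
  Real.sInf_nonneg fun _ hr => RSet_nonneg hr

lemma RSet_nonempty {h : E2 → ℝ} (hh : Continuous h)
    (hB : 0 < ∫ x in unitSquare, h x ^ 2) : (RSet h).Nonempty := by
  set u0 : E2 → ℝ := fun x => Real.sin (2 * π * x 0) with hu0
  have hu0c : ContDiff ℝ (⊤ : ℕ∞) u0 := by
    apply Real.contDiff_sin.comp
    exact contDiff_const.mul ((EuclideanSpace.proj (0 : Fin 2) : E2 →L[ℝ] ℝ).contDiff)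
  set c : ℝ := (∫ x in unitSquare, u0 x * h x ^ 2) / (∫ x in unitSquare, h x ^ 2) with hc
  set u : E2 → ℝ := fun x => u0 x - c with hu
  have huc : ContDiff ℝ (⊤ : ℕ∞) u := hu0c.sub contDiff_const
  have hadd : ∀ (x : E2) (i : Fin 2),
      (x + EuclideanSpace.single i (1:ℝ)) 0 = x 0 + if (0:Fin 2) = i then 1 else 0 := by
    intro x i
    simp [PiLp.add_apply, EuclideanSpace.single_apply]
  have hper : ZsqPeriodic u := by
    intro x i
    simp only [hu, hu0]
    rw [hadd x i]
    fin_cases i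
    · norm_num [mul_add, Real.sin_add_two_pi]
    · norm_num
  have hune : u ≠ 0 := by
    intro h0
    have e1 : (EuclideanSpace.single (0:Fin 2) (1/4:ℝ)) 0 = 1/4 := by
      simp [EuclideanSpace.single_apply]
    have e2 : (EuclideanSpace.single (0:Fin 2) (3/4:ℝ)) 0 = 3/4 := by
      simp [EuclideanSpace.single_apply]
    have h1 : u (EuclideanSpace.single 0 (1/4 : ℝ)) = 0 := by rw [h0]; rfl
    have h2 : u (EuclideanSpace.single 0 (3/4 : ℝ)) = 0 := by rw [h0]; rfl
    simp only [hu, hu0, e1, e2, sub_eq_zero] at h1 h2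
    rw [show 2 * π * (1/4 : ℝ) = π / 2 by ring, Real.sin_pi_div_two] at h1
    rw [show 2 * π * (3/4 : ℝ) = π / 2 + π by ring, Real.sin_add_pi,
      Real.sin_pi_div_two] at h2
    linarith [h1, h2]
  have hmean : (∫ x in unitSquare, u x * h x ^ 2) = 0 := by
    have : ∀ x : E2, u x * h x ^ 2 = u0 x * h x ^ 2 - c * h x ^ 2 := fun x => by
      rw [hu]; ring
    simp only [this]
    rw [integral_sub (integrableOn_sq _ (by fun_prop))
      ((integrableOn_sq _ (by fun_prop : Continuous fun x : E2 => h x ^ 2)).const_mul _),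
      integral_const_mul, hc]
    field_simp
    simp
  exact ⟨_, u, huc, hper, hune, hmean, rfl⟩

lemma arith {A Ak B Bk Iuk δ : ℝ} (hδ0 : 0 ≤ δ) (hδ1 : δ ≤ 1/5)
    (hApos : 0 < A) (hB : 0 < B) (hBkpos : 0 < Bk)
    (hAk_ge : (1 - δ) * A ≤ Ak) (hBk_ge : (1 - δ) * B ≤ Bk)
    (hI2 : Iuk ^ 2 ≤ δ ^ 2 * (A * B)) :
    A / (1 + 4 * δ) ≤ Ak - Iuk ^ 2 / Bk := by
  have hK : (0:ℝ) < 1 + 4 * δ := by linarith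
  have h1δ : (0:ℝ) < 1 - δ := by linarith
  have hfrac : Iuk ^ 2 / Bk * ((1 - δ) * B) ≤ δ ^ 2 * (A * B) := by
    rw [div_mul_eq_mul_div, div_le_iff₀ hBkpos]
    nlinarith [hI2, hBk_ge, sq_nonneg Iuk, mul_pos hApos hB,
      mul_nonneg (mul_nonneg (sq_nonneg δ) hApos.le) hB.le]
  have hfrac2 : Iuk ^ 2 / Bk * (1 - δ) ≤ δ ^ 2 * A := by
    nlinarith [hfrac, hB, div_nonneg (sq_nonneg Iuk) hBkpos.le]
  rw [div_le_iff₀ hK]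
  have hs : 0 ≤ Iuk ^ 2 / Bk := div_nonneg (sq_nonneg _) hBkpos.le
  have step1 : A * (1 - δ) ≤ (((1 - δ) * A - Iuk ^ 2 / Bk) * (1 + 4 * δ)) * (1 - δ) := by
    nlinarith [mul_le_mul_of_nonneg_right hfrac2 hK.le,
      mul_nonneg (mul_nonneg hApos.le hδ0) (by linarith : (0:ℝ) ≤ 3 - 8 * δ)]
  have step2 : A ≤ ((1 - δ) * A - Iuk ^ 2 / Bk) * (1 + 4 * δ) :=
    le_of_mul_le_mul_right step1 h1δ
  nlinarith [step2, mul_le_mul_of_nonneg_right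
    (by linarith [hAk_ge] : (1 - δ) * A - Iuk ^ 2 / Bk ≤ Ak - Iuk ^ 2 / Bk) hK.le]

set_option maxHeartbeats 1000000 in
lemma mu1_le_mul {h k : E2 → ℝ} (hh : Continuous h) (hhp : ∀ x, 0 < h x)
    (hk : Continuous k) (hkp : ∀ x, 0 < k x) {δ : ℝ} (hδ0 : 0 ≤ δ) (hδ1 : δ ≤ 1/5)
    (hcl : ∀ x ∈ unitSquare, |k x ^ 2 - h x ^ 2| ≤ δ * h x ^ 2) :
    mu1 k ≤ (1 + 4 * δ) * mu1 h := by
  have hB : 0 < ∫ x in unitSquare, h x ^ 2 := integral_sq_h_pos hh hhp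
  have hBk : 0 < ∫ x in unitSquare, k x ^ 2 := integral_sq_h_pos hk hkp
  have hK : (0:ℝ) < 1 + 4 * δ := by linarith
  have key : ∀ r ∈ RSet h, mu1 k ≤ (1 + 4 * δ) * r := by
    rintro r ⟨u, hsm, hper, hune, hmean, rfl⟩
    have huc : Continuous u := hsm.continuous
    set N := ∫ x in unitSquare, ‖gradient u x‖ ^ 2 with hN
    set A := ∫ x in unitSquare, u x ^ 2 * h x ^ 2 with hA
    set Ak := ∫ x in unitSquare, u x ^ 2 * k x ^ 2 with hAk
    set B := ∫ x in unitSquare, h x ^ 2 with hBdef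
    set Bk := ∫ x in unitSquare, k x ^ 2 with hBkdef
    set Iuk := ∫ x in unitSquare, u x * k x ^ 2 with hIuk
    have hApos : 0 < A := integral_u_sq_pos huc hper hune hh hhp
    have hNnn : 0 ≤ N := setIntegral_nonneg measurableSet_unitSquare (fun x _ => sq_nonneg _)
    have hlow : ∀ x ∈ unitSquare, (1 - δ) * h x ^ 2 ≤ k x ^ 2 := by
      intro x hx
      have := abs_le.1 (hcl x hx)
      linarith [this.1]
    have hAk_ge : (1 - δ) * A ≤ Ak := by
      rw [hA, ← integral_const_mul]
      apply setIntegral_mono_on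
        ((integrableOn_sq _ (by fun_prop : Continuous fun x : E2 => u x ^ 2 * h x ^ 2)).const_mul _)
        (integrableOn_sq _ (by fun_prop))
        measurableSet_unitSquare
      intro x hx
      have := hlow x hx
      nlinarith [sq_nonneg (u x)]
    have hBk_ge : (1 - δ) * B ≤ Bk := by
      rw [hBdef, ← integral_const_mul]
      apply setIntegral_mono_on
        ((integrableOn_sq _ (by fun_prop : Continuous fun x : E2 => h x ^ 2)).const_mul _)
        (integrableOn_sq _ (by fun_prop))
        measurableSet_unitSquare
      exact hlow
    have hIabs : |Iuk| ≤ δ * ∫ x in unitSquare, |u x| * h x ^ 2 := by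
      have hIeq : Iuk = ∫ x in unitSquare, u x * (k x ^ 2 - h x ^ 2) := by
        rw [hIuk, ← sub_zero (∫ x in unitSquare, u x * k x ^ 2), ← hmean,
          ← integral_sub (integrableOn_sq _ (by fun_prop))
            (integrableOn_sq _ (by fun_prop))]
        congr 1
        funext x
        ring
      rw [hIeq]
      calc |∫ x in unitSquare, u x * (k x ^ 2 - h x ^ 2)|
          ≤ ∫ x in unitSquare, |u x * (k x ^ 2 - h x ^ 2)| := by
            simpa [Real.norm_eq_abs, -abs_mul] using
              norm_integral_le_integral_norm (μ := volume.restrict unitSquare)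
                (fun x => u x * (k x ^ 2 - h x ^ 2))
        _ ≤ ∫ x in unitSquare, δ * (|u x| * h x ^ 2) := by
            apply setIntegral_mono_on
              (integrableOn_sq _ (by fun_prop))
              ((integrableOn_sq _ (by fun_prop : Continuous fun x : E2 =>
                |u x| * h x ^ 2)).const_mul _)
              measurableSet_unitSquare
            intro x hx
            rw [abs_mul]
            calc |u x| * |k x ^ 2 - h x ^ 2| ≤ |u x| * (δ * h x ^ 2) :=
                  mul_le_mul_of_nonneg_left (hcl x hx) (abs_nonneg _)
              _ = δ * (|u x| * h x ^ 2) := by ring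
        _ = δ * ∫ x in unitSquare, |u x| * h x ^ 2 := integral_const_mul _ _
    have hCS : (∫ x in unitSquare, |u x| * h x ^ 2) ^ 2 ≤ A * B := by
      have h1 : (∫ x in unitSquare, |u x| * h x ^ 2) =
          ∫ x in unitSquare, (|u x| * h x) * h x := by
        congr 1; funext x; ring
      have h2 : A = ∫ x in unitSquare, (|u x| * h x) ^ 2 := by
        rw [hA]; congr 1; funext x
        rw [mul_pow, sq_abs]
      rw [h1, h2]
      exact cauchy_schwarz (huc.abs.mul hh) hh hB
    have hInn : 0 ≤ ∫ x in unitSquare, |u x| * h x ^ 2 :=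
      setIntegral_nonneg measurableSet_unitSquare
        (fun x _ => mul_nonneg (abs_nonneg _) (sq_nonneg _))
    have hI2 : Iuk ^ 2 ≤ δ ^ 2 * (A * B) := by
      have := mul_self_le_mul_self (abs_nonneg Iuk) hIabs
      calc Iuk ^ 2 = |Iuk| * |Iuk| := by rw [← abs_mul, abs_mul_self]; ring
        _ ≤ (δ * ∫ x in unitSquare, |u x| * h x ^ 2) *
            (δ * ∫ x in unitSquare, |u x| * h x ^ 2) := this
        _ = δ ^ 2 * (∫ x in unitSquare, |u x| * h x ^ 2) ^ 2 := by ring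
        _ ≤ δ ^ 2 * (A * B) := by nlinarith [sq_nonneg δ, hCS]
    set c : ℝ := Iuk / Bk with hc
    set v : E2 → ℝ := fun x => u x - c with hv
    have hBkpos : (0:ℝ) < Bk := hBk
    have h1δ : (0:ℝ) < 1 - δ := by linarith
    have hD : (∫ x in unitSquare, v x ^ 2 * k x ^ 2) = Ak - Iuk ^ 2 / Bk := by
      rw [hv]
      rw [expand_denominator huc hk c, hc]
      field_simp
      ring
    have hD_ge : A / (1 + 4 * δ) ≤ ∫ x in unitSquare, v x ^ 2 * k x ^ 2 := by
      rw [hD]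
      exact arith hδ0 hδ1 hApos hB hBkpos hAk_ge hBk_ge hI2
    have hDpos : 0 < ∫ x in unitSquare, v x ^ 2 * k x ^ 2 :=
      lt_of_lt_of_le (div_pos hApos hK) hD_ge
    have hNv : (∫ x in unitSquare, ‖gradient v x‖ ^ 2) = N := by
      rw [hN, hv, gradient_sub_const]
    have hmean_v : (∫ x in unitSquare, v x * k x ^ 2) = 0 := by
      have : ∀ x : E2, v x * k x ^ 2 = u x * k x ^ 2 - c * k x ^ 2 := fun x => by
        rw [hv]; ring
      simp only [this]
      rw [integral_sub (integrableOn_sq _ (by fun_prop))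
        ((integrableOn_sq _ (by fun_prop : Continuous fun x : E2 => k x ^ 2)).const_mul _),
        integral_const_mul, hc]
      field_simp
      rw [hIuk, hBkdef]; ring
    have hvne : v ≠ 0 := by
      intro h0
      have hux : ∀ x : E2, u x = c := by
        intro x
        have := congrFun h0 x
        simp only [hv, Pi.zero_apply, sub_eq_zero] at this
        exact this
      have : (∫ x in unitSquare, u x * h x ^ 2) = c * B := by
        rw [hBdef, ← integral_const_mul]
        congr 1
        funext x
        rw [hux x]
      rw [hmean] at this
      have hc0 : c = 0 := by
        rcases mul_eq_zero.1 this.symm with hcc | hcc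
        · exact hcc
        · exact absurd hcc hB.ne'
      apply hune
      funext x
      rw [hux x, hc0]
      rfl
    have hmem : N / (∫ x in unitSquare, v x ^ 2 * k x ^ 2) ∈ RSet k := by
      refine ⟨v, hsm.sub contDiff_const, ?_, hvne, hmean_v, by rw [hNv]⟩
      intro x i
      simp only [hv, hper x i]
    have h1 : mu1 k ≤ N / (∫ x in unitSquare, v x ^ 2 * k x ^ 2) := by
      rw [mu1_eq]
      exact csInf_le (RSet_bddBelow k) hmem
    have h2 : N / (∫ x in unitSquare, v x ^ 2 * k x ^ 2) ≤ N / (A / (1 + 4 * δ)) := by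
      exact div_le_div_of_nonneg_left hNnn (div_pos hApos hK) hD_ge
    have h3 : N / (A / (1 + 4 * δ)) = (1 + 4 * δ) * (N / A) := by
      field_simp
    calc mu1 k ≤ N / (∫ x in unitSquare, v x ^ 2 * k x ^ 2) := h1
      _ ≤ N / (A / (1 + 4 * δ)) := h2
      _ = (1 + 4 * δ) * (N / A) := h3
  have hne := RSet_nonempty hh hB
  have hdiv : mu1 k / (1 + 4 * δ) ≤ sInf (RSet h) := by
    apply le_csInf hne
    intro r hr
    rw [div_le_iff₀ hK]
    have := key r hr
    linarith [this]
  rw [div_le_iff₀ hK] at hdiv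
  rw [← mu1_eq] at hdiv
  linarith [hdiv]

end Stmt7Aux


set_option maxHeartbeats 1000000 in
theorem stmt_7 (f : EuclideanSpace ℝ (Fin 2) → ℝ)
    (fn : ℕ → EuclideanSpace ℝ (Fin 2) → ℝ)
    (hf_cont : Continuous f) (hf_pos : ∀ x, 0 < f x) (hf_per : ZsqPeriodic f)
    (hfn_cont : ∀ n, Continuous (fn n)) (hfn_pos : ∀ n x, 0 < fn n x)
    (hfn_per : ∀ n, ZsqPeriodic (fn n))
    (hconv : TendstoUniformly fn f atTop) :
    Tendsto (fun n => mu1 (fn n)) atTop (nhds (mu1 f)) := by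
  rw [Metric.tendsto_atTop]
  intro ε hε
  have hSne : (unitSquare).Nonempty := ⟨0, fun i => by simp⟩
  obtain ⟨xm, hxmS, hmin⟩ :=
    Stmt7Aux.isCompact_unitSquare.exists_isMinOn hSne hf_cont.continuousOn
  obtain ⟨xM, hxMS, hmax⟩ :=
    Stmt7Aux.isCompact_unitSquare.exists_isMaxOn hSne hf_cont.continuousOn
  set a : ℝ := f xm with haa
  set M : ℝ := f xM with hMM
  have ha : 0 < a := hf_pos xm
  have hM : 0 < M := hf_pos xM
  have hmu0 : 0 ≤ mu1 f := Stmt7Aux.mu1_nonneg f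
  set δ : ℝ := min (1/10) (ε / (32 * (mu1 f + 1))) with hδdef
  have hδpos : 0 < δ := lt_min (by norm_num) (div_pos hε (by nlinarith))
  have hδ10 : δ ≤ 1/10 := min_le_left _ _
  have hδε : δ ≤ ε / (32 * (mu1 f + 1)) := min_le_right _ _
  have h32 : δ * (32 * (mu1 f + 1)) ≤ ε :=
    (le_div_iff₀ (by positivity)).1 hδε
  set ε₁ : ℝ := min 1 (δ * a ^ 2 / (2 * M + 1)) with hε₁def
  have hε₁pos : 0 < ε₁ := lt_min one_pos (div_pos (by positivity) (by linarith))
  have hε₁1 : ε₁ ≤ 1 := min_le_left _ _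
  have hε₁2 : ε₁ ≤ δ * a ^ 2 / (2 * M + 1) := min_le_right _ _
  have hcv := Metric.tendstoUniformly_iff.1 hconv ε₁ hε₁pos
  rw [eventually_atTop] at hcv
  obtain ⟨Nn, hNn⟩ := hcv
  refine ⟨Nn, fun n hn => ?_⟩
  have hclose : ∀ x, |f x - fn n x| < ε₁ := fun x => by
    rw [← Real.dist_eq]; exact hNn n hn x
  have hb1 : ∀ x ∈ unitSquare, |fn n x ^ 2 - f x ^ 2| ≤ δ * f x ^ 2 := by
    intro x hx
    have h1 : |fn n x - f x| ≤ ε₁ := by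
      rw [abs_sub_comm]; exact (hclose x).le
    have hfa : a ≤ f x := (isMinOn_iff.1 hmin) x hx
    have hfM : f x ≤ M := (isMaxOn_iff.1 hmax) x hx
    have hfnM : fn n x ≤ M + 1 := by
      have h2 : fn n x - f x ≤ |fn n x - f x| := le_abs_self _
      linarith
    have habs : |fn n x ^ 2 - f x ^ 2| = |fn n x - f x| * (fn n x + f x) := by
      rw [show fn n x ^ 2 - f x ^ 2 = (fn n x - f x) * (fn n x + f x) by ring, abs_mul,
        abs_of_pos (add_pos (hfn_pos n x) (hf_pos x))]
    have hsum : fn n x + f x ≤ 2 * M + 1 := by linarith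
    have hprod : |fn n x - f x| * (fn n x + f x) ≤ ε₁ * (2 * M + 1) :=
      mul_le_mul h1 hsum (add_pos (hfn_pos n x) (hf_pos x)).le hε₁pos.le
    have hstep : ε₁ * (2 * M + 1) ≤ δ * a ^ 2 := by
      rw [le_div_iff₀ (by linarith : (0:ℝ) < 2 * M + 1)] at hε₁2
      linarith
    have hfin : δ * a ^ 2 ≤ δ * f x ^ 2 := by
      apply mul_le_mul_of_nonneg_left _ hδpos.le
      nlinarith
    rw [habs]
    linarith
  have hupper : mu1 (fn n) ≤ (1 + 4 * δ) * mu1 f :=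
    Stmt7Aux.mu1_le_mul hf_cont hf_pos (hfn_cont n) (hfn_pos n) hδpos.le
      (by linarith) hb1
  have hb2 : ∀ x ∈ unitSquare, |f x ^ 2 - fn n x ^ 2| ≤ (2 * δ) * fn n x ^ 2 := by
    intro x hx
    have h1 := abs_le.1 (hb1 x hx)
    have hf2 : f x ^ 2 ≤ 2 * fn n x ^ 2 := by nlinarith [sq_nonneg (f x)]
    rw [abs_sub_comm]
    have h2 : |fn n x ^ 2 - f x ^ 2| ≤ δ * f x ^ 2 := hb1 x hx
    nlinarith [hδpos.le, mul_le_mul_of_nonneg_left hf2 hδpos.le]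
  have hlower : mu1 f ≤ (1 + 4 * (2 * δ)) * mu1 (fn n) :=
    Stmt7Aux.mu1_le_mul (hfn_cont n) (hfn_pos n) hf_cont hf_pos
      (by linarith) (by linarith) hb2
  have h0n : 0 ≤ mu1 (fn n) := Stmt7Aux.mu1_nonneg _
  rw [Real.dist_eq, abs_lt]
  constructor
  · -- mu1 f - mu1 (fn n) < ε
    have hkey := mul_le_mul_of_nonneg_left hupper hδpos.le
    nlinarith [hlower, hupper, h32, hδpos, hδ10, hmu0, h0n, hε, hkey,
      mul_nonneg hδpos.le h0n, mul_nonneg hδpos.le hmu0,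
      mul_nonneg (mul_nonneg hδpos.le hδpos.le) hmu0,
      mul_le_mul_of_nonneg_left hδ10 (mul_nonneg hδpos.le hmu0)]
  · nlinarith [hupper, h32, hδpos, hmu0, hε, mul_nonneg hδpos.le hmu0]
end
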